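/- arXiv:1404.6983 — 3 statements merged into one kernel-verified Lean document; each statement's English description precedes it below -/
import Mathlib

section
/- Let n ≥ 1, let ω : ℝ^{n-1} → ℝ be a globally Lipschitz function, and let Ω = {(x_h, x_n) ∈ ℝ^{n-1} × ℝ : x_n > ω(x_h)} be the special Lipschitz domain above its graph. Let c = inf_{x_h ∈ ℝ^{n-1}} 1/√(1 + |∇_h ω(x_h)|²), which satisfies c > 0 since ω is globally Lipschitz (c = cos θ where θ ∈ [0, π/2) is the angle defined by θ = arccos c). Then for every smooth compactly supported function φ : ℝ^n → ℝ, the trace inequality ∫_{ℝ^{n-1}} φ(x_h, ω(x_h))² √(1 + |∇_h ω(x_h)|²) dx_h ≤ (2/c) · ‖φ‖_{L²(Ω)} · ‖∇φ‖_{L²(Ω, ℝ^n)} holds, where the left-hand side is the surface integral ∫_Γ |φ|² dσ over the boundary graph Γ = {(x_h, ω(x_h)) : x_h ∈ ℝ^{n-1}} expressed via the area formula. -/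
open MeasureTheory

open Set Filter Topology in
/-- **Trace inequality on a special Lipschitz domain.**
Let `ω : ℝ^{n-1} → ℝ` be globally Lipschitz (and differentiable, with its gradient `∇_h ω`),
let `Ω = {(x_h, x_n) : x_n > ω x_h}` be the domain above its graph, and let
`c = ⨅ x_h, 1 / √(1 + |∇_h ω x_h|²)` (which equals `cos θ > 0`).  Then for every smooth
compactly supported `φ : ℝ^n → ℝ`,
`∫_Γ |φ|² dσ = ∫ φ(x_h, ω x_h)² √(1 + |∇_h ω x_h|²) dx_h ≤ (2/c) ‖φ‖_{L²(Ω)} ‖∇φ‖_{L²(Ω)}`,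
where `|∇φ|² = |∇_h φ|² + (∂_n φ)²`. Here `ℝ^{n-1}` is modelled as
`EuclideanSpace ℝ (Fin d)` with `d = n - 1`. -/
theorem trace_inequality_special_lipschitz_domain
    (d : ℕ) (ω : EuclideanSpace ℝ (Fin d) → ℝ) (L : NNReal)
    (hω_lip : LipschitzWith L ω) (hω_diff : Differentiable ℝ ω)
    (Ω : Set (EuclideanSpace ℝ (Fin d) × ℝ))
    (hΩ : Ω = {p : EuclideanSpace ℝ (Fin d) × ℝ | ω p.1 < p.2})
    (c : ℝ)
    (hc : c = ⨅ x_h : EuclideanSpace ℝ (Fin d),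
      1 / Real.sqrt (1 + ‖gradient ω x_h‖ ^ 2))
    (φ : EuclideanSpace ℝ (Fin d) × ℝ → ℝ)
    (hφ : ContDiff ℝ (⊤ : ℕ∞) φ) (hφc : HasCompactSupport φ) :
    ∫ x_h : EuclideanSpace ℝ (Fin d),
        (φ (x_h, ω x_h)) ^ 2 * Real.sqrt (1 + ‖gradient ω x_h‖ ^ 2) ≤
      (2 / c) * Real.sqrt (∫ x in Ω, (φ x) ^ 2) *
        Real.sqrt (∫ x in Ω,
          (‖gradient (fun y => φ (y, x.2)) x.1‖ ^ 2 + (fderiv ℝ φ x (0, 1)) ^ 2)) := by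
  have hφdiff : Differentiable ℝ φ := hφ.differentiable (by simp)
  have hφcont : Continuous φ := hφ.continuous
  have hfdcont : Continuous (fderiv ℝ φ) := hφ.continuous_fderiv (by simp)
  have hωcont : Continuous ω := hω_lip.continuous
  have hΩmeas : MeasurableSet Ω := by
    rw [hΩ]; exact measurableSet_lt (hωcont.measurable.comp measurable_fst) measurable_snd
  -- the vertical derivative
  set D : EuclideanSpace ℝ (Fin d) × ℝ → ℝ := fun p => fderiv ℝ φ p (0, 1) with hD
  have hDcont : Continuous D := hfdcont.clm_apply continuous_const
  have hDzero : ∀ p : EuclideanSpace ℝ (Fin d) × ℝ, p ∉ tsupport φ → D p = 0 := by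
    intro p hp
    have : fderiv ℝ φ p = 0 := by
      by_contra h
      exact hp (support_fderiv_subset ℝ h)
    simp [hD, this]
  -- bounds on the gradient of ω and on c
  have hgradle : ∀ x : EuclideanSpace ℝ (Fin d), ‖gradient ω x‖ ≤ L := by
    intro x
    show ‖(InnerProductSpace.toDual ℝ (EuclideanSpace ℝ (Fin d))).symm (fderiv ℝ ω x)‖ ≤ L
    rw [LinearIsometryEquiv.norm_map]
    exact norm_fderiv_le_of_lipschitz ℝ hω_lip
  have hsqrt_pos : ∀ x : EuclideanSpace ℝ (Fin d), 0 < Real.sqrt (1 + ‖gradient ω x‖ ^ 2) := by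
    intro x
    apply Real.sqrt_pos.2
    positivity
  have hlb : ∀ x : EuclideanSpace ℝ (Fin d), 1 / Real.sqrt (1 + (L : ℝ) ^ 2) ≤
      1 / Real.sqrt (1 + ‖gradient ω x‖ ^ 2) := by
    intro x
    apply one_div_le_one_div_of_le (hsqrt_pos x)
    apply Real.sqrt_le_sqrt
    have := hgradle x
    nlinarith [norm_nonneg (gradient ω x)]
  have hcpos : 0 < c := by
    rw [hc]
    have h0 : (0:ℝ) < 1 / Real.sqrt (1 + (L : ℝ) ^ 2) := by positivity
    exact lt_of_lt_of_le h0 (le_ciInf hlb)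
  have hBdd : BddBelow (Set.range fun x : EuclideanSpace ℝ (Fin d) => 1 / Real.sqrt (1 + ‖gradient ω x‖ ^ 2)) := by
    refine ⟨0, ?_⟩
    rintro y ⟨x, rfl⟩
    positivity
  have hsqrt_le : ∀ x : EuclideanSpace ℝ (Fin d), Real.sqrt (1 + ‖gradient ω x‖ ^ 2) ≤ 1 / c := by
    intro x
    have h1 : c ≤ 1 / Real.sqrt (1 + ‖gradient ω x‖ ^ 2) := hc ▸ ciInf_le hBdd x
    rw [le_div_iff₀ (hsqrt_pos x)] at h1
    rw [le_div_iff₀ hcpos]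
    linarith [h1]
  -- auxiliary vanishing facts
  have hzero2 : ∀ a : EuclideanSpace ℝ (Fin d), ∀ t : ℝ, t ∉ Prod.snd '' tsupport φ → φ (a, t) = 0 := by
    intro a t ht
    by_contra h
    exact ht ⟨(a, t), subset_tsupport _ h, rfl⟩
  have hK2 : IsCompact (Prod.snd '' tsupport φ) := hφc.image continuous_snd
  have hzero1 : ∀ a : EuclideanSpace ℝ (Fin d), a ∉ Prod.fst '' tsupport φ → φ (a, ω a) = 0 := by
    intro a ha
    by_contra h
    exact ha ⟨(a, ω a), subset_tsupport _ h, rfl⟩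
  have hK1 : IsCompact (Prod.fst '' tsupport φ) := hφc.image continuous_fst
  -- the integrand on the boundary
  set ψ : EuclideanSpace ℝ (Fin d) × ℝ → ℝ := fun p => 2 * |φ p| * |D p| with hψ
  have hψcont : Continuous ψ := (continuous_const.mul hφcont.abs).mul hDcont.abs
  have hψcs : HasCompactSupport ψ := by
    apply HasCompactSupport.intro hφc
    intro p hp
    have h1 : φ p = 0 := image_eq_zero_of_notMem_tsupport hp
    simp [hψ, h1]
  have hψint : Integrable ψ := hψcont.integrable_of_hasCompactSupport hψcs
  have hψnn : ∀ p, 0 ≤ ψ p := by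
    intro p
    simp only [hψ]
    positivity
  -- pointwise trace bound via FTC on vertical lines
  have key : ∀ a : EuclideanSpace ℝ (Fin d), φ (a, ω a) ^ 2 ≤ ∫ t in Ioi (ω a), ψ (a, t) := by
    intro a
    have hmk : Continuous fun t : ℝ => ((a, t) : EuclideanSpace ℝ (Fin d) × ℝ) := Continuous.prodMk_right a
    have hF : ∀ t : ℝ, HasDerivAt (fun s => φ (a, s)) (D (a, t)) t := by
      intro t
      have hγ : HasDerivAt (fun s : ℝ => ((a, s) : EuclideanSpace ℝ (Fin d) × ℝ)) ((0 : EuclideanSpace ℝ (Fin d)), (1 : ℝ)) t :=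
        (hasDerivAt_const t a).prodMk (hasDerivAt_id t)
      exact (hφdiff (a, t)).hasFDerivAt.comp_hasDerivAt t hγ
    have hG : ∀ t : ℝ, HasDerivAt (fun s => φ (a, s) ^ 2)
        (2 * φ (a, t) * D (a, t)) t := fun t => by simpa using (hF t).fun_pow 2
    have hGcs : HasCompactSupport (fun s : ℝ => φ (a, s) ^ 2) :=
      HasCompactSupport.intro hK2 (fun t ht => by rw [hzero2 a t ht]; ring)
    have htend : Tendsto (fun s : ℝ => φ (a, s) ^ 2) atTop (𝓝 0) := by
      rw [hasCompactSupport_iff_eventuallyEq, Filter.coclosedCompact_eq_cocompact] at hGcs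
      exact hGcs.filter_mono atTop_le_cocompact |>.tendsto
    have hG'int : Integrable (fun t : ℝ => 2 * φ (a, t) * D (a, t)) := by
      refine Continuous.integrable_of_hasCompactSupport ?_ ?_
      · exact (continuous_const.mul (hφcont.comp hmk)).mul (hDcont.comp hmk)
      · exact HasCompactSupport.intro hK2 (fun t ht => by rw [hzero2 a t ht]; ring)
    have hψaint : Integrable (fun t : ℝ => ψ (a, t)) := by
      refine Continuous.integrable_of_hasCompactSupport (hψcont.comp hmk) ?_
      refine HasCompactSupport.intro hK2 (fun t ht => ?_)
      have h1 : φ (a, t) = 0 := hzero2 a t ht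
      simp [hψ, h1]
    have heq : ∫ t in Ioi (ω a), 2 * φ (a, t) * D (a, t) = 0 - φ (a, ω a) ^ 2 :=
      integral_Ioi_of_hasDerivAt_of_tendsto' (fun t _ => hG t) hG'int.integrableOn htend
    have hrw : φ (a, ω a) ^ 2 = ∫ t in Ioi (ω a), -(2 * φ (a, t) * D (a, t)) := by
      rw [integral_neg, heq]; ring
    rw [hrw]
    refine integral_mono hG'int.neg.integrableOn hψaint.integrableOn fun t => ?_
    calc -(2 * φ (a, t) * D (a, t)) ≤ |2 * φ (a, t) * D (a, t)| := neg_le_abs _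
      _ = ψ (a, t) := by rw [hψ]; simp [abs_mul, mul_assoc]
  -- integrability of the boundary integrand
  have hTr0 : Integrable (fun a : EuclideanSpace ℝ (Fin d) => φ (a, ω a) ^ 2) := by
    refine Continuous.integrable_of_hasCompactSupport ?_ ?_
    · exact (hφcont.comp (continuous_id.prodMk hωcont)).pow 2
    · exact HasCompactSupport.intro hK1 (fun a ha => by rw [hzero1 a ha]; ring)
  have hmgrad : Measurable fun x : EuclideanSpace ℝ (Fin d) => Real.sqrt (1 + ‖gradient ω x‖ ^ 2) := by
    have m1 : Measurable fun x : EuclideanSpace ℝ (Fin d) => gradient ω x :=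
      ((InnerProductSpace.toDual ℝ (EuclideanSpace ℝ (Fin d))).symm.continuous.measurable).comp (measurable_fderiv ℝ ω)
    exact Real.continuous_sqrt.measurable.comp
      (measurable_const.add ((m1.norm).pow_const 2))
  have hTrInt : Integrable
      (fun a : EuclideanSpace ℝ (Fin d) => φ (a, ω a) ^ 2 * Real.sqrt (1 + ‖gradient ω a‖ ^ 2)) := by
    have h := hTr0.bdd_mul (hmgrad.aestronglyMeasurable)
      (Eventually.of_forall fun x => by
        rw [Real.norm_eq_abs, abs_of_nonneg (Real.sqrt_nonneg _)]
        exact hsqrt_le x)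
    exact h.congr (Eventually.of_forall fun a => by ring)
  -- Fubini on the epigraph
  have hsection : ∀ a : EuclideanSpace ℝ (Fin d), (∫ t, Ω.indicator ψ (a, t)) = ∫ t in Ioi (ω a), ψ (a, t) := by
    intro a
    rw [← integral_indicator measurableSet_Ioi]
    congr 1
    funext t
    simp [Set.indicator_apply, hΩ, Set.mem_Ioi, Set.mem_setOf_eq]
  have hΨint : Integrable (Ω.indicator ψ) (volume.prod volume) := by
    rw [← Measure.volume_eq_prod]; exact hψint.indicator hΩmeas
  have hfub : (∫ x in Ω, ψ x) = ∫ a, ∫ t in Ioi (ω a), ψ (a, t) := by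
    rw [← integral_indicator hΩmeas, Measure.volume_eq_prod, integral_prod _ hΨint]
    exact integral_congr_ae (Eventually.of_forall hsection)
  have hIa : Integrable (fun a : EuclideanSpace ℝ (Fin d) => ∫ t in Ioi (ω a), ψ (a, t)) := by
    have h2 := hΨint.integral_prod_left
    refine h2.congr (Eventually.of_forall fun a => ?_)
    exact hsection a
  have hIann : ∀ a : EuclideanSpace ℝ (Fin d), 0 ≤ ∫ t in Ioi (ω a), ψ (a, t) := fun a =>
    integral_nonneg fun t => hψnn (a, t)
  -- pointwise comparison after multiplying by the area element
  have hmono_a : ∀ a : EuclideanSpace ℝ (Fin d), φ (a, ω a) ^ 2 * Real.sqrt (1 + ‖gradient ω a‖ ^ 2) ≤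
      (1 / c) * ∫ t in Ioi (ω a), ψ (a, t) := by
    intro a
    calc φ (a, ω a) ^ 2 * Real.sqrt (1 + ‖gradient ω a‖ ^ 2)
        ≤ φ (a, ω a) ^ 2 * (1 / c) :=
          mul_le_mul_of_nonneg_left (hsqrt_le a) (sq_nonneg _)
      _ = (1 / c) * φ (a, ω a) ^ 2 := by ring
      _ ≤ (1 / c) * ∫ t in Ioi (ω a), ψ (a, t) :=
          mul_le_mul_of_nonneg_left (key a) (by positivity)
  -- Cauchy–Schwarz on Ω
  have hφmem : MemLp φ (ENNReal.ofReal 2) (volume.restrict Ω) :=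
    (hφcont.memLp_of_hasCompactSupport hφc).restrict Ω
  have hDcs : HasCompactSupport D :=
    HasCompactSupport.intro hφc (fun p hp => hDzero p hp)
  have hDmem : MemLp D (ENNReal.ofReal 2) (volume.restrict Ω) :=
    (hDcont.memLp_of_hasCompactSupport hDcs).restrict Ω
  have hCS : (∫ x in Ω, ψ x) ≤
      2 * Real.sqrt (∫ x in Ω, φ x ^ 2) * Real.sqrt (∫ x in Ω, D x ^ 2) := by
    have h := integral_mul_norm_le_Lp_mul_Lq
      Real.HolderConjugate.two_two hφmem hDmem
    simp only [Real.norm_eq_abs] at h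
    have hstep : (∫ x in Ω, ψ x) = 2 * ∫ x in Ω, |φ x| * |D x| := by
      rw [← integral_const_mul]
      refine integral_congr_ae (Eventually.of_forall fun x => ?_)
      simp [hψ, mul_assoc]
    rw [hstep]
    have hfin : (∫ x in Ω, |φ x| * |D x|) ≤
        Real.sqrt (∫ x in Ω, φ x ^ 2) * Real.sqrt (∫ x in Ω, D x ^ 2) := by
      calc (∫ x in Ω, |φ x| * |D x|) ≤
          (∫ x in Ω, |φ x| ^ (2:ℝ)) ^ (1/(2:ℝ)) * (∫ x in Ω, |D x| ^ (2:ℝ)) ^ (1/(2:ℝ)) := h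
        _ = Real.sqrt (∫ x in Ω, φ x ^ 2) * Real.sqrt (∫ x in Ω, D x ^ 2) := by
            rw [Real.sqrt_eq_rpow, Real.sqrt_eq_rpow]
            congr 1 <;>
            · congr 1
              refine integral_congr_ae (Eventually.of_forall fun x => ?_)
              simp only []
              rw [show ((2:ℝ)) = ((2:ℕ):ℝ) from by norm_num, Real.rpow_natCast, sq_abs]
    calc 2 * ∫ x in Ω, |φ x| * |D x| ≤
        2 * (Real.sqrt (∫ x in Ω, φ x ^ 2) * Real.sqrt (∫ x in Ω, D x ^ 2)) :=
          mul_le_mul_of_nonneg_left hfin (by norm_num)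
      _ = 2 * Real.sqrt (∫ x in Ω, φ x ^ 2) * Real.sqrt (∫ x in Ω, D x ^ 2) := by ring
  -- comparing the vertical-derivative energy with the full gradient energy
  have hHeq : ∀ x : EuclideanSpace ℝ (Fin d) × ℝ, ‖gradient (fun y => φ (y, x.2)) x.1‖ =
      ‖(fderiv ℝ φ x).comp (ContinuousLinearMap.inl ℝ (EuclideanSpace ℝ (Fin d)) ℝ)‖ := by
    intro x
    have h1 : HasFDerivAt φ (fderiv ℝ φ x) (x.1, x.2) := by
      rw [Prod.mk.eta]; exact (hφdiff x).hasFDerivAt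
    have h2 : fderiv ℝ (fun y => φ (y, x.2)) x.1
        = (fderiv ℝ φ x).comp (ContinuousLinearMap.inl ℝ (EuclideanSpace ℝ (Fin d)) ℝ) :=
      (h1.comp x.1 (hasFDerivAt_prodMk_left x.1 x.2)).fderiv
    show ‖(InnerProductSpace.toDual ℝ (EuclideanSpace ℝ (Fin d))).symm (fderiv ℝ (fun y => φ (y, x.2)) x.1)‖ = _
    rw [LinearIsometryEquiv.norm_map, h2]
  have hHcont : Continuous fun x : EuclideanSpace ℝ (Fin d) × ℝ => ‖gradient (fun y => φ (y, x.2)) x.1‖ ^ 2 := by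
    have : Continuous fun x : EuclideanSpace ℝ (Fin d) × ℝ =>
        ‖(fderiv ℝ φ x).comp (ContinuousLinearMap.inl ℝ (EuclideanSpace ℝ (Fin d)) ℝ)‖ ^ 2 :=
      ((hfdcont.clm_comp continuous_const).norm).pow 2
    exact this.congr fun x => by rw [hHeq x]
  have hHzero : ∀ x : EuclideanSpace ℝ (Fin d) × ℝ, x ∉ tsupport φ →
      ‖gradient (fun y => φ (y, x.2)) x.1‖ ^ 2 = 0 := by
    intro x hx
    have : fderiv ℝ φ x = 0 := by
      by_contra h
      exact hx (support_fderiv_subset ℝ h)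
    rw [hHeq x, this]
    simp
  have hDsqint : IntegrableOn (fun x : EuclideanSpace ℝ (Fin d) × ℝ => D x ^ 2) Ω := by
    refine (Continuous.integrable_of_hasCompactSupport (hDcont.pow 2) ?_).integrableOn
    exact HasCompactSupport.intro hφc (fun p hp => by rw [Pi.pow_apply, hDzero p hp]; ring)
  have hHDint : IntegrableOn
      (fun x : EuclideanSpace ℝ (Fin d) × ℝ => ‖gradient (fun y => φ (y, x.2)) x.1‖ ^ 2 + D x ^ 2) Ω := by
    refine (Continuous.integrable_of_hasCompactSupport (hHcont.add (hDcont.pow 2)) ?_).integrableOn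
    refine HasCompactSupport.intro hφc (fun p hp => ?_)
    simp only [Pi.add_apply, Pi.pow_apply]
    rw [hHzero p hp, hDzero p hp]; ring
  have hBB' : (∫ x in Ω, D x ^ 2) ≤
      ∫ x in Ω, (‖gradient (fun y => φ (y, x.2)) x.1‖ ^ 2 + D x ^ 2) :=
    integral_mono hDsqint hHDint fun x => le_add_of_nonneg_left (by positivity)
  -- final chain
  calc ∫ a : EuclideanSpace ℝ (Fin d), φ (a, ω a) ^ 2 * Real.sqrt (1 + ‖gradient ω a‖ ^ 2)
      ≤ ∫ a : EuclideanSpace ℝ (Fin d), (1 / c) * ∫ t in Ioi (ω a), ψ (a, t) :=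
        integral_mono hTrInt (hIa.const_mul _) hmono_a
    _ = (1 / c) * ∫ x in Ω, ψ x := by rw [integral_const_mul, ← hfub]
    _ ≤ (1 / c) * (2 * Real.sqrt (∫ x in Ω, φ x ^ 2) * Real.sqrt (∫ x in Ω, D x ^ 2)) :=
        mul_le_mul_of_nonneg_left hCS (by positivity)
    _ = (2 / c) * Real.sqrt (∫ x in Ω, φ x ^ 2) * Real.sqrt (∫ x in Ω, D x ^ 2) := by ring
    _ ≤ (2 / c) * Real.sqrt (∫ x in Ω, φ x ^ 2) *
        Real.sqrt (∫ x in Ω,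
          (‖gradient (fun y => φ (y, x.2)) x.1‖ ^ 2 + (fderiv ℝ φ x (0, 1)) ^ 2)) := by
        refine mul_le_mul_of_nonneg_left (Real.sqrt_le_sqrt hBB') ?_
        have : 0 ≤ 2 / c := by positivity
        positivity
end

section
/- Let n ≥ 1, let ω : ℝ^{n-1} → ℝ be a globally Lipschitz function, let Ω = {(x_h, x_n) ∈ ℝ^{n-1} × ℝ : x_n > ω(x_h)}, and let c = inf_{x_h ∈ ℝ^{n-1}} 1/√(1 + |∇_h ω(x_h)|²) > 0. Then for every smooth compactly supported function φ : ℝ^n → ℝ, one has ∫_{ℝ^{n-1}} φ(x_h, ω(x_h))² √(1 + |∇_h ω(x_h)|²) dx_h ≤ (1/c) · (‖φ‖²_{L²(Ω)} + ‖∇φ‖²_{L²(Ω, ℝ^n)}). (This is the quadratic-form version of the trace estimate, showing that the trace operator from H¹(Ω) to L²(Γ, dσ) has operator norm at most 1/√c.) -/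
open MeasureTheory Set Filter Topology

set_option maxHeartbeats 1000000 in
/-- **Quadratic-form version of the trace estimate on a special Lipschitz domain.**
With `ω : ℝ^{n-1} → ℝ` globally Lipschitz (and differentiable),
`Ω = {(x_h, x_n) : x_n > ω x_h}` and `c = ⨅ x_h, 1 / √(1 + |∇_h ω x_h|²) > 0`,
every smooth compactly supported `φ : ℝ^n → ℝ` satisfies
`∫ φ(x_h, ω x_h)² √(1 + |∇_h ω x_h|²) dx_h ≤ (1/c) (‖φ‖²_{L²(Ω)} + ‖∇φ‖²_{L²(Ω)})`,
where `|∇φ|² = |∇_h φ|² + (∂_n φ)²`; i.e. the trace operator `H¹(Ω) → L²(Γ, dσ)` has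
norm at most `1/√c`. Here `ℝ^{n-1}` is modelled as `EuclideanSpace ℝ (Fin d)`. -/
theorem trace_inequality_quadratic_form_special_lipschitz_domain
    (d : ℕ) (ω : EuclideanSpace ℝ (Fin d) → ℝ) (L : NNReal)
    (hω_lip : LipschitzWith L ω) (hω_diff : Differentiable ℝ ω)
    (Ω : Set (EuclideanSpace ℝ (Fin d) × ℝ))
    (hΩ : Ω = {p : EuclideanSpace ℝ (Fin d) × ℝ | ω p.1 < p.2})
    (c : ℝ)
    (hc : c = ⨅ x_h : EuclideanSpace ℝ (Fin d),
      1 / Real.sqrt (1 + ‖gradient ω x_h‖ ^ 2))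
    (φ : EuclideanSpace ℝ (Fin d) × ℝ → ℝ)
    (hφ : ContDiff ℝ (⊤ : ℕ∞) φ) (hφc : HasCompactSupport φ) :
    ∫ x_h : EuclideanSpace ℝ (Fin d),
        (φ (x_h, ω x_h)) ^ 2 * Real.sqrt (1 + ‖gradient ω x_h‖ ^ 2) ≤
      (1 / c) * ((∫ x in Ω, (φ x) ^ 2) +
        ∫ x in Ω,
          (‖gradient (fun y => φ (y, x.2)) x.1‖ ^ 2 + (fderiv ℝ φ x (0, 1)) ^ 2)) := by
  have hφd : Differentiable ℝ φ := hφ.differentiable (by simp)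
  have hφcont : Continuous φ := hφ.continuous
  have hfderiv_cont : Continuous (fderiv ℝ φ) := hφ.continuous_fderiv (by simp)
  set D : (EuclideanSpace ℝ (Fin d)) × ℝ → ℝ := fun p => fderiv ℝ φ p (0, 1) with hD
  have hD_cont : Continuous D := hfderiv_cont.clm_apply continuous_const
  have hDsupp : HasCompactSupport D := by
    refine (HasCompactSupport.fderiv (𝕜 := ℝ) hφc).mono ?_
    intro p hp
    simp only [Function.mem_support, hD] at hp ⊢
    intro h; exact hp (by rw [h]; rfl)
  set F : (EuclideanSpace ℝ (Fin d)) × ℝ → ℝ := fun p => φ p ^ 2 + D p ^ 2 with hF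
  have hF_cont : Continuous F := (hφcont.pow 2).add (hD_cont.pow 2)
  have hφsq_supp : HasCompactSupport fun p : (EuclideanSpace ℝ (Fin d)) × ℝ => φ p ^ 2 := by
    refine hφc.mono ?_
    intro p hp
    simp only [Function.mem_support] at hp ⊢
    intro h; exact hp (by rw [h]; ring)
  have hDsq_supp : HasCompactSupport fun p : (EuclideanSpace ℝ (Fin d)) × ℝ => D p ^ 2 := by
    refine hDsupp.mono ?_
    intro p hp
    simp only [Function.mem_support] at hp ⊢
    intro h; exact hp (by rw [h]; ring)
  have hF_supp : HasCompactSupport F := hφsq_supp.add hDsq_supp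
  have hF_int : Integrable F := hF_cont.integrable_of_hasCompactSupport hF_supp
  have hφsq_int : Integrable fun p : (EuclideanSpace ℝ (Fin d)) × ℝ => φ p ^ 2 :=
    (hφcont.pow 2).integrable_of_hasCompactSupport hφsq_supp
  have hDsq_int : Integrable fun p : (EuclideanSpace ℝ (Fin d)) × ℝ => D p ^ 2 :=
    (hD_cont.pow 2).integrable_of_hasCompactSupport hDsq_supp
  have hΩopen : IsOpen Ω := by
    rw [hΩ]; exact isOpen_lt (hω_lip.continuous.comp continuous_fst) continuous_snd
  have hΩmeas : MeasurableSet Ω := hΩopen.measurableSet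
  -- the key slice estimate
  have key : ∀ a : (EuclideanSpace ℝ (Fin d)), φ (a, ω a) ^ 2 ≤ ∫ t in Ioi (ω a), F (a, t) := by
    intro a
    have hce : Topology.IsClosedEmbedding (fun t : ℝ => ((a, t) : (EuclideanSpace ℝ (Fin d)) × ℝ)) := by
      refine Isometry.isClosedEmbedding ?_
      apply Isometry.of_dist_eq
      intro s t
      simp [Prod.dist_eq, dist_nonneg]
    have hcurve : ∀ t : ℝ, HasDerivAt (fun s => φ (a, s)) (D (a, t)) t := by
      intro t
      have h1 : HasDerivAt (fun s : ℝ => ((a, s) : (EuclideanSpace ℝ (Fin d)) × ℝ)) (((0 : (EuclideanSpace ℝ (Fin d))), (1 : ℝ))) t :=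
        (hasDerivAt_const t a).prodMk (hasDerivAt_id t)
      exact ((hφd (a, t)).hasFDerivAt).comp_hasDerivAt t h1
    have hgd : ∀ t : ℝ, HasDerivAt (fun s => φ (a, s) ^ 2)
        (2 * φ (a, t) * D (a, t)) t := by
      intro t
      have := (hcurve t).fun_pow 2
      simpa using this
    have hslice_supp : HasCompactSupport fun t : ℝ => φ (a, t) ^ 2 := by
      have : HasCompactSupport fun t : ℝ => φ (a, t) := hφc.comp_isClosedEmbedding hce
      refine this.mono ?_
      intro t ht
      simp only [Function.mem_support] at ht ⊢
      intro h; exact ht (by rw [h]; ring)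
    have htend : Tendsto (fun t : ℝ => φ (a, t) ^ 2) atTop (𝓝 0) :=
      hslice_supp.is_zero_at_infty.mono_left atTop_le_cocompact
    have hderiv_supp : HasCompactSupport fun t : ℝ => 2 * φ (a, t) * D (a, t) := by
      have : HasCompactSupport fun t : ℝ => φ (a, t) := hφc.comp_isClosedEmbedding hce
      refine this.mono ?_
      intro t ht
      simp only [Function.mem_support] at ht ⊢
      intro h; exact ht (by rw [h]; ring)
    have hderiv_cont : Continuous fun t : ℝ => 2 * φ (a, t) * D (a, t) := by
      have h1 : Continuous fun t : ℝ => φ (a, t) :=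
        hφcont.comp (continuous_const.prodMk continuous_id)
      have h2 : Continuous fun t : ℝ => D (a, t) :=
        hD_cont.comp (continuous_const.prodMk continuous_id)
      exact (continuous_const.mul h1).mul h2
    have hderiv_int : IntegrableOn (fun t : ℝ => 2 * φ (a, t) * D (a, t)) (Ioi (ω a)) :=
      (hderiv_cont.integrable_of_hasCompactSupport hderiv_supp).integrableOn
    have hFTC : ∫ t in Ioi (ω a), 2 * φ (a, t) * D (a, t) = 0 - φ (a, ω a) ^ 2 :=
      integral_Ioi_of_hasDerivAt_of_tendsto
        (((hgd (ω a)).continuousAt).continuousWithinAt)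
        (fun t _ => hgd t) hderiv_int htend
    have hFslice_int : IntegrableOn (fun t : ℝ => F (a, t)) (Ioi (ω a)) := by
      have h1 : Continuous fun t : ℝ => F (a, t) :=
        hF_cont.comp (continuous_const.prodMk continuous_id)
      have h2 : HasCompactSupport fun t : ℝ => F (a, t) := hF_supp.comp_isClosedEmbedding hce
      exact (h1.integrable_of_hasCompactSupport h2).integrableOn
    have hmono : ∫ t in Ioi (ω a), -(2 * φ (a, t) * D (a, t)) ≤
        ∫ t in Ioi (ω a), F (a, t) := by
      refine setIntegral_mono_on hderiv_int.neg hFslice_int measurableSet_Ioi ?_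
      intro t _
      simp only [hF]
      nlinarith [sq_nonneg (φ (a, t) + D (a, t))]
    calc φ (a, ω a) ^ 2 = ∫ t in Ioi (ω a), -(2 * φ (a, t) * D (a, t)) := by
          rw [integral_neg, hFTC]; ring
      _ ≤ ∫ t in Ioi (ω a), F (a, t) := hmono
  -- bounds on c
  have hgradle : ∀ x : (EuclideanSpace ℝ (Fin d)), ‖gradient ω x‖ ≤ (L : ℝ) := by
    intro x
    have h1 : ‖fderiv ℝ ω x‖ ≤ (L : ℝ) := norm_fderiv_le_of_lipschitz ℝ hω_lip
    simpa [gradient] using h1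
  have sqpos : ∀ x : (EuclideanSpace ℝ (Fin d)), 0 < Real.sqrt (1 + ‖gradient ω x‖ ^ 2) := by
    intro x; apply Real.sqrt_pos.2; positivity
  have hsqle : ∀ x : (EuclideanSpace ℝ (Fin d)), Real.sqrt (1 + ‖gradient ω x‖ ^ 2) ≤ Real.sqrt (1 + (L : ℝ) ^ 2) := by
    intro x
    apply Real.sqrt_le_sqrt
    nlinarith [hgradle x, norm_nonneg (gradient ω x)]
  have hbdd : BddBelow (Set.range fun x : (EuclideanSpace ℝ (Fin d)) => 1 / Real.sqrt (1 + ‖gradient ω x‖ ^ 2)) := by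
    refine ⟨0, ?_⟩; rintro _ ⟨x, rfl⟩; positivity
  have hcpos : 0 < c := by
    rw [hc]
    have hL : 0 < Real.sqrt (1 + (L : ℝ) ^ 2) := by positivity
    refine lt_of_lt_of_le (show (0:ℝ) < 1 / Real.sqrt (1 + (L : ℝ) ^ 2) by positivity) ?_
    refine le_ciInf fun x => ?_
    exact one_div_le_one_div_of_le (sqpos x) (hsqle x)
  have hcle : ∀ x : (EuclideanSpace ℝ (Fin d)), Real.sqrt (1 + ‖gradient ω x‖ ^ 2) ≤ 1 / c := by
    intro x
    have h1 : c ≤ 1 / Real.sqrt (1 + ‖gradient ω x‖ ^ 2) := hc ▸ ciInf_le hbdd x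
    have h2 : c * Real.sqrt (1 + ‖gradient ω x‖ ^ 2) ≤ 1 := by
      rw [le_div_iff₀ (sqpos x)] at h1; linarith
    rw [le_div_iff₀ hcpos]; linarith [mul_comm c (Real.sqrt (1 + ‖gradient ω x‖ ^ 2))]
  -- Fubini
  have hIndInt : Integrable (Ω.indicator F) ((volume : Measure (EuclideanSpace ℝ (Fin d))).prod volume) := by
    rw [← Measure.volume_eq_prod]
    exact hF_int.indicator hΩmeas
  have hfub0 : ∀ a : (EuclideanSpace ℝ (Fin d)), (∫ t : ℝ, Ω.indicator F (a, t)) = ∫ t in Ioi (ω a), F (a, t) := by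
    intro a
    rw [← integral_indicator measurableSet_Ioi]
    congr 1 with t
    simp only [hΩ, indicator_apply, mem_setOf_eq, mem_Ioi]
  have hfub : ∫ x in Ω, F x = ∫ a : (EuclideanSpace ℝ (Fin d)), ∫ t in Ioi (ω a), F (a, t) := by
    rw [← integral_indicator hΩmeas, Measure.volume_eq_prod, integral_prod _ hIndInt]
    exact integral_congr_ae (ae_of_all _ fun a => hfub0 a)
  have hIger : Integrable fun a : (EuclideanSpace ℝ (Fin d)) => ∫ t in Ioi (ω a), F (a, t) := by
    have := hIndInt.integral_prod_left
    exact this.congr (ae_of_all _ fun a => hfub0 a)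
  -- trace function integrability
  have hT_cont : Continuous fun a : (EuclideanSpace ℝ (Fin d)) => φ (a, ω a) ^ 2 := by
    have : Continuous fun a : (EuclideanSpace ℝ (Fin d)) => φ (a, ω a) :=
      hφcont.comp (continuous_id.prodMk hω_lip.continuous)
    exact this.pow 2
  have hT_supp : HasCompactSupport fun a : (EuclideanSpace ℝ (Fin d)) => φ (a, ω a) ^ 2 := by
    refine HasCompactSupport.intro (hφc.image continuous_fst) ?_
    intro a ha
    by_contra h
    apply ha
    have : φ (a, ω a) ≠ 0 := fun h0 => h (by rw [h0]; ring)
    have hmem : (a, ω a) ∈ tsupport φ := subset_tsupport φ this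
    exact ⟨(a, ω a), hmem, rfl⟩
  have hT_int : Integrable fun a : (EuclideanSpace ℝ (Fin d)) => φ (a, ω a) ^ 2 :=
    hT_cont.integrable_of_hasCompactSupport hT_supp
  have hgrad_meas : Measurable fun x : (EuclideanSpace ℝ (Fin d)) => gradient ω x := by
    have h1 : Measurable (fderiv ℝ ω) := measurable_fderiv ℝ ω
    exact ((InnerProductSpace.toDual ℝ (EuclideanSpace ℝ (Fin d))).symm.continuous.measurable).comp h1
  have hsqrt_meas : Measurable fun x : (EuclideanSpace ℝ (Fin d)) => Real.sqrt (1 + ‖gradient ω x‖ ^ 2) :=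
    Real.continuous_sqrt.measurable.comp (measurable_const.add ((hgrad_meas.norm).pow_const 2))
  have hLHS_int : Integrable fun a : (EuclideanSpace ℝ (Fin d)) =>
      φ (a, ω a) ^ 2 * Real.sqrt (1 + ‖gradient ω a‖ ^ 2) := by
    refine Integrable.mono' (hT_int.mul_const (Real.sqrt (1 + (L : ℝ) ^ 2)))
      (hT_cont.aestronglyMeasurable.mul hsqrt_meas.aestronglyMeasurable)
      (ae_of_all _ fun a => ?_)
    have h1 : (0:ℝ) ≤ φ (a, ω a) ^ 2 := sq_nonneg _
    have h2 := hsqle a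
    have h3 := (sqpos a).le
    rw [Real.norm_eq_abs, abs_of_nonneg (by positivity)]
    exact mul_le_mul_of_nonneg_left h2 h1
  -- main chain
  have step1 : ∫ a : (EuclideanSpace ℝ (Fin d)), φ (a, ω a) ^ 2 * Real.sqrt (1 + ‖gradient ω a‖ ^ 2) ≤
      ∫ a : (EuclideanSpace ℝ (Fin d)), (1 / c) * ∫ t in Ioi (ω a), F (a, t) := by
    refine integral_mono hLHS_int (hIger.const_mul _) fun a => ?_
    have h1 : φ (a, ω a) ^ 2 * Real.sqrt (1 + ‖gradient ω a‖ ^ 2) ≤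
        φ (a, ω a) ^ 2 * (1 / c) := mul_le_mul_of_nonneg_left (hcle a) (sq_nonneg _)
    have h2 : (1 / c) * (φ (a, ω a) ^ 2) ≤ (1 / c) * ∫ t in Ioi (ω a), F (a, t) :=
      mul_le_mul_of_nonneg_left (key a) (by positivity)
    calc φ (a, ω a) ^ 2 * Real.sqrt (1 + ‖gradient ω a‖ ^ 2)
        ≤ φ (a, ω a) ^ 2 * (1 / c) := h1
      _ = (1 / c) * (φ (a, ω a) ^ 2) := by ring
      _ ≤ (1 / c) * ∫ t in Ioi (ω a), F (a, t) := h2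
  have step2 : ∫ a : (EuclideanSpace ℝ (Fin d)), (1 / c) * ∫ t in Ioi (ω a), F (a, t) = (1 / c) * ∫ x in Ω, F x := by
    rw [integral_const_mul, hfub]
  -- last comparison on Ω
  -- gradient of the slice
  set A : (((EuclideanSpace ℝ (Fin d)) × ℝ) →L[ℝ] ℝ) →L[ℝ] ((EuclideanSpace ℝ (Fin d)) →L[ℝ] ℝ) :=
    (ContinuousLinearMap.compL ℝ (EuclideanSpace ℝ (Fin d)) ((EuclideanSpace ℝ (Fin d)) × ℝ) ℝ).flip (ContinuousLinearMap.inl ℝ (EuclideanSpace ℝ (Fin d)) ℝ) with hA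
  have hslicefd : ∀ x : (EuclideanSpace ℝ (Fin d)) × ℝ,
      fderiv ℝ (fun y => φ (y, x.2)) x.1 = A (fderiv ℝ φ x) := by
    intro x
    have h1 : HasFDerivAt (fun y : (EuclideanSpace ℝ (Fin d)) => ((y, x.2) : (EuclideanSpace ℝ (Fin d)) × ℝ))
        (ContinuousLinearMap.inl ℝ (EuclideanSpace ℝ (Fin d)) ℝ) x.1 :=
      (hasFDerivAt_id x.1).prodMk (hasFDerivAt_const x.2 x.1)
    have h2 : HasFDerivAt (fun y => φ (y, x.2))
        ((fderiv ℝ φ x).comp (ContinuousLinearMap.inl ℝ (EuclideanSpace ℝ (Fin d)) ℝ)) x.1 :=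
      ((hφd x).hasFDerivAt).comp x.1 h1
    rw [h2.fderiv]
    rfl
  have hgs : ∀ x : (EuclideanSpace ℝ (Fin d)) × ℝ, ‖gradient (fun y => φ (y, x.2)) x.1‖ = ‖A (fderiv ℝ φ x)‖ := by
    intro x
    rw [gradient, hslicefd x]
    exact LinearIsometryEquiv.norm_map _ _
  have hG_cont : Continuous fun x : (EuclideanSpace ℝ (Fin d)) × ℝ =>
      ‖gradient (fun y => φ (y, x.2)) x.1‖ ^ 2 + D x ^ 2 := by
    have h1 : Continuous fun x : (EuclideanSpace ℝ (Fin d)) × ℝ => ‖A (fderiv ℝ φ x)‖ ^ 2 :=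
      ((A.continuous.comp hfderiv_cont).norm.pow 2)
    have h2 : Continuous fun x : (EuclideanSpace ℝ (Fin d)) × ℝ => ‖gradient (fun y => φ (y, x.2)) x.1‖ ^ 2 :=
      h1.congr fun x => by rw [hgs x]
    exact h2.add (hD_cont.pow 2)
  have hG_supp : HasCompactSupport fun x : (EuclideanSpace ℝ (Fin d)) × ℝ =>
      ‖gradient (fun y => φ (y, x.2)) x.1‖ ^ 2 + D x ^ 2 := by
    refine HasCompactSupport.intro hφc ?_
    intro x hx
    have hfd0 : fderiv ℝ φ x = 0 := by
      by_contra h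
      exact hx (support_fderiv_subset ℝ (Function.mem_support.2 h))
    have h1 : ‖gradient (fun y => φ (y, x.2)) x.1‖ = 0 := by
      rw [hgs x, hfd0, map_zero, norm_zero]
    have h2 : D x = 0 := by simp [hD, hfd0]
    rw [h1, h2]; ring
  have hG_int : IntegrableOn (fun x : (EuclideanSpace ℝ (Fin d)) × ℝ =>
      ‖gradient (fun y => φ (y, x.2)) x.1‖ ^ 2 + D x ^ 2) Ω :=
    (hG_cont.integrable_of_hasCompactSupport hG_supp).integrableOn
  have step3 : ∫ x in Ω, F x ≤
      (∫ x in Ω, φ x ^ 2) +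
        ∫ x in Ω, (‖gradient (fun y => φ (y, x.2)) x.1‖ ^ 2 + D x ^ 2) := by
    have hsplit : ∫ x in Ω, F x = (∫ x in Ω, φ x ^ 2) + ∫ x in Ω, D x ^ 2 :=
      integral_add hφsq_int.integrableOn hDsq_int.integrableOn
    rw [hsplit]
    refine add_le_add le_rfl ?_
    refine setIntegral_mono_on hDsq_int.integrableOn hG_int hΩmeas fun x _ => ?_
    nlinarith [sq_nonneg ‖gradient (fun y => φ (y, x.2)) x.1‖]
  calc ∫ a : (EuclideanSpace ℝ (Fin d)), φ (a, ω a) ^ 2 * Real.sqrt (1 + ‖gradient ω a‖ ^ 2)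
      ≤ ∫ a : (EuclideanSpace ℝ (Fin d)), (1 / c) * ∫ t in Ioi (ω a), F (a, t) := step1
    _ = (1 / c) * ∫ x in Ω, F x := step2
    _ ≤ (1 / c) * ((∫ x in Ω, φ x ^ 2) +
        ∫ x in Ω, (‖gradient (fun y => φ (y, x.2)) x.1‖ ^ 2 + D x ^ 2)) := by
        exact mul_le_mul_of_nonneg_left step3 (by positivity)
end

section
/- Let n ≥ 1, let ω : ℝ^{n-1} → ℝ be a globally Lipschitz function, and let Ω = {(x_h, x_n) ∈ ℝ^{n-1} × ℝ : x_n > ω(x_h)}. Then for every smooth compactly supported function φ : ℝ^n → ℝ, the unweighted trace estimate ∫_{ℝ^{n-1}} φ(x_h, ω(x_h))² dx_h ≤ 2 · ‖φ‖_{L²(Ω)} · ‖∂_n φ‖_{L²(Ω)} holds, where ∂_n φ denotes the partial derivative of φ in the last (vertical) coordinate. In particular, ∫_{ℝ^{n-1}} φ(x_h, ω(x_h))² dx_h ≤ 2 · ‖φ‖_{L²(Ω)} · ‖∇φ‖_{L²(Ω, ℝ^n)}. -/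
open MeasureTheory Set Filter Topology

theorem trace_aux
    (d : ℕ) (ω : EuclideanSpace ℝ (Fin d) → ℝ) (L : NNReal)
    (hω_lip : LipschitzWith L ω)
    (Ω : Set (EuclideanSpace ℝ (Fin d) × ℝ))
    (hΩ : Ω = {p : EuclideanSpace ℝ (Fin d) × ℝ | ω p.1 < p.2})
    (φ : EuclideanSpace ℝ (Fin d) × ℝ → ℝ)
    (hφ : ContDiff ℝ (⊤ : ℕ∞) φ) (hφc : HasCompactSupport φ) :
    (∫ x_h : EuclideanSpace ℝ (Fin d), (φ (x_h, ω x_h)) ^ 2) ≤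
      2 * Real.sqrt (∫ x in Ω, (φ x) ^ 2) *
        Real.sqrt (∫ x in Ω, (fderiv ℝ φ x (0, 1)) ^ 2) := by
  classical
  set D : EuclideanSpace ℝ (Fin d) × ℝ → ℝ := fun x => fderiv ℝ φ x (0, 1) with hD
  have hφ1 : ContDiff ℝ 1 φ := hφ.of_le (by simp)
  have hφd : Differentiable ℝ φ := hφ1.differentiable one_ne_zero
  have hfc : Continuous (fderiv ℝ φ) := hφ.continuous_fderiv (by simp)
  have hDcont : Continuous D := hfc.clm_apply continuous_const
  have hDsupp : Function.support D ⊆ tsupport φ := by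
    intro x hx
    by_contra hxt
    apply hx
    have h0 : φ =ᶠ[𝓝 x] 0 := notMem_tsupport_iff_eventuallyEq.mp hxt
    have h1 : fderiv ℝ φ x = fderiv ℝ (fun _ => (0:ℝ)) x := h0.fderiv_eq
    simp only [fderiv_fun_const] at h1
    simp [hD, h1]
  have hDc : HasCompactSupport D := hφc.mono' hDsupp
  have hΩmeas : MeasurableSet Ω := by
    rw [hΩ]
    exact measurableSet_lt ((hω_lip.continuous.comp continuous_fst).measurable)
      continuous_snd.measurable
  have hK : IsCompact (Prod.snd '' tsupport φ) := hφc.image continuous_snd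
  -- FTC in each slice
  have slice : ∀ x : EuclideanSpace ℝ (Fin d),
      ∫ t in Ioi (ω x), (-(2 * φ (x, t) * D (x, t))) = φ (x, ω x) ^ 2 := by
    intro x
    have hcomp : ContDiff ℝ 1 (fun t : ℝ => φ (x, t)) :=
      hφ1.comp (contDiff_const.prodMk contDiff_id)
    have hf : ContDiff ℝ 1 (fun t : ℝ => φ (x, t) ^ 2) := hcomp.pow 2
    have hsup : HasCompactSupport (fun t : ℝ => φ (x, t) ^ 2) := by
      apply HasCompactSupport.intro hK
      intro t ht
      have : φ (x, t) = 0 := by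
        by_contra h
        exact ht ⟨(x, t), subset_tsupport φ h, rfl⟩
      simp [this]
    have hftc := hsup.integral_Ioi_deriv_eq hf (ω x)
    have hderiv : ∀ t : ℝ, HasDerivAt (fun t : ℝ => φ (x, t) ^ 2)
        (2 * φ (x, t) * D (x, t)) t := by
      intro t
      have h1 : HasDerivAt (fun t : ℝ => (x, t)) ((0 : EuclideanSpace ℝ (Fin d)), (1:ℝ)) t :=
        (hasDerivAt_const t x).prodMk (hasDerivAt_id t)
      have h2 : HasDerivAt (fun t : ℝ => φ (x, t)) (D (x, t)) t :=
        (hφd (x, t)).hasFDerivAt.comp_hasDerivAt t h1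
      have := h2.fun_pow 2
      simpa [hD, mul_comm, mul_assoc, mul_left_comm] using this
    have hde : ∀ t : ℝ, deriv (fun t : ℝ => φ (x, t) ^ 2) t = 2 * φ (x, t) * D (x, t) :=
      fun t => (hderiv t).deriv
    rw [show (fun t : ℝ => -(2 * φ (x, t) * D (x, t)))
        = fun t : ℝ => -(deriv (fun s : ℝ => φ (x, s) ^ 2) t) from
        funext fun t => by rw [hde], integral_neg, hftc, neg_neg]
  -- integrability
  have hFcont : Continuous (fun p => -(2 * φ p * D p)) :=
    ((continuous_const.mul hφ.continuous).mul hDcont).neg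
  have hFsupp : HasCompactSupport (fun p => -(2 * φ p * D p)) := by
    apply hφc.mono
    intro x hx
    simp only [Function.mem_support] at hx ⊢
    intro h0
    exact hx (by simp [h0])
  have hFint : Integrable (fun p => -(2 * φ p * D p)) :=
    hFcont.integrable_of_hasCompactSupport hFsupp
  -- Fubini + FTC
  have fub : (∫ x_h : EuclideanSpace ℝ (Fin d), (φ (x_h, ω x_h)) ^ 2)
      = ∫ x in Ω, (-(2 * φ x * D x)) := by
    rw [← integral_indicator hΩmeas, Measure.volume_eq_prod,
      integral_prod _ (by rw [← Measure.volume_eq_prod]; exact hFint.indicator hΩmeas)]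
    congr 1
    funext x
    have hind : ∀ t : ℝ, Ω.indicator (fun p => -(2 * φ p * D p)) (x, t)
        = (Ioi (ω x)).indicator (fun t => -(2 * φ (x, t) * D (x, t))) t := by
      intro t
      simp only [indicator, hΩ, mem_setOf_eq, mem_Ioi]
    rw [show (fun t => Ω.indicator (fun p => -(2 * φ p * D p)) (x, t)) = _ from funext hind,
      integral_indicator measurableSet_Ioi, slice x]
  -- bound by absolute values
  have habs : (∫ x in Ω, (-(2 * φ x * D x))) ≤ 2 * ∫ x in Ω, |φ x| * |D x| := by
    calc (∫ x in Ω, (-(2 * φ x * D x))) ≤ ‖∫ x in Ω, (-(2 * φ x * D x))‖ := le_abs_self _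
    _ ≤ ∫ x in Ω, ‖(-(2 * φ x * D x))‖ := norm_integral_le_integral_norm _
    _ = ∫ x in Ω, 2 * (|φ x| * |D x|) := by
        congr 1; funext x
        rw [Real.norm_eq_abs, abs_neg, abs_mul, abs_mul]
        rw [abs_of_nonneg (by norm_num : (0:ℝ) ≤ 2)]; ring
    _ = 2 * ∫ x in Ω, |φ x| * |D x| := integral_const_mul 2 _
  -- Cauchy-Schwarz
  have hpq : (2:ℝ).HolderConjugate 2 := ⟨by norm_num, by norm_num, by norm_num⟩
  have hφl2 : MemLp (fun x => |φ x|) (ENNReal.ofReal 2) (volume.restrict Ω) := by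
    rw [ENNReal.ofReal_ofNat]
    simpa [Real.norm_eq_abs] using
      ((hφ.continuous.memLp_of_hasCompactSupport (p := 2) hφc).restrict Ω).norm
  have hDl2 : MemLp (fun x => |D x|) (ENNReal.ofReal 2) (volume.restrict Ω) := by
    rw [ENNReal.ofReal_ofNat]
    simpa [Real.norm_eq_abs] using
      ((hDcont.memLp_of_hasCompactSupport (p := 2) hDc).restrict Ω).norm
  have CS := integral_mul_le_Lp_mul_Lq_of_nonneg hpq
    (Eventually.of_forall fun x => abs_nonneg (φ x))
    (Eventually.of_forall fun x => abs_nonneg (D x)) hφl2 hDl2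
  have e1 : (∫ x in Ω, |φ x| ^ (2:ℝ)) = ∫ x in Ω, φ x ^ 2 := by
    congr 1; funext x
    rw [show ((2:ℝ)) = ((2:ℕ):ℝ) by norm_num, Real.rpow_natCast, sq_abs]
  have e2 : (∫ x in Ω, |D x| ^ (2:ℝ)) = ∫ x in Ω, D x ^ 2 := by
    congr 1; funext x
    rw [show ((2:ℝ)) = ((2:ℕ):ℝ) by norm_num, Real.rpow_natCast, sq_abs]
  rw [e1, e2] at CS
  have h1 : (0:ℝ) ≤ ∫ x in Ω, φ x ^ 2 := integral_nonneg fun x => sq_nonneg _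
  have h2 : (0:ℝ) ≤ ∫ x in Ω, D x ^ 2 := integral_nonneg fun x => sq_nonneg _
  rw [← Real.sqrt_eq_rpow, ← Real.sqrt_eq_rpow] at CS
  calc (∫ x_h : EuclideanSpace ℝ (Fin d), (φ (x_h, ω x_h)) ^ 2)
      = ∫ x in Ω, (-(2 * φ x * D x)) := fub
    _ ≤ 2 * ∫ x in Ω, |φ x| * |D x| := habs
    _ ≤ 2 * (Real.sqrt (∫ x in Ω, φ x ^ 2) * Real.sqrt (∫ x in Ω, D x ^ 2)) := by
        exact mul_le_mul_of_nonneg_left CS (by norm_num)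
    _ = 2 * Real.sqrt (∫ x in Ω, φ x ^ 2) * Real.sqrt (∫ x in Ω, D x ^ 2) := by ring

/-- **Unweighted trace estimate on a special Lipschitz domain.**
Let `ω : ℝ^{n-1} → ℝ` be globally Lipschitz and `Ω = {(x_h, x_n) : x_n > ω x_h}`.
For every smooth compactly supported `φ : ℝ^n → ℝ`,
`∫ φ(x_h, ω x_h)² dx_h ≤ 2 ‖φ‖_{L²(Ω)} ‖∂_n φ‖_{L²(Ω)}`, and in particular
`∫ φ(x_h, ω x_h)² dx_h ≤ 2 ‖φ‖_{L²(Ω)} ‖∇φ‖_{L²(Ω)}`, where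
`∂_n φ x = fderiv ℝ φ x (0, 1)` is the vertical derivative and
`|∇φ|² = |∇_h φ|² + (∂_n φ)²`. Here `ℝ^{n-1}` is `EuclideanSpace ℝ (Fin d)`. -/
theorem unweighted_trace_estimate_special_lipschitz_domain
    (d : ℕ) (ω : EuclideanSpace ℝ (Fin d) → ℝ) (L : NNReal)
    (hω_lip : LipschitzWith L ω)
    (Ω : Set (EuclideanSpace ℝ (Fin d) × ℝ))
    (hΩ : Ω = {p : EuclideanSpace ℝ (Fin d) × ℝ | ω p.1 < p.2})
    (φ : EuclideanSpace ℝ (Fin d) × ℝ → ℝ)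
    (hφ : ContDiff ℝ (⊤ : ℕ∞) φ) (hφc : HasCompactSupport φ) :
    (∫ x_h : EuclideanSpace ℝ (Fin d), (φ (x_h, ω x_h)) ^ 2) ≤
      2 * Real.sqrt (∫ x in Ω, (φ x) ^ 2) *
        Real.sqrt (∫ x in Ω, (fderiv ℝ φ x (0, 1)) ^ 2) ∧
    (∫ x_h : EuclideanSpace ℝ (Fin d), (φ (x_h, ω x_h)) ^ 2) ≤
      2 * Real.sqrt (∫ x in Ω, (φ x) ^ 2) *
        Real.sqrt (∫ x in Ω,
          (‖gradient (fun y => φ (y, x.2)) x.1‖ ^ 2 + (fderiv ℝ φ x (0, 1)) ^ 2)) := by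
  have key := trace_aux d ω L hω_lip Ω hΩ φ hφ hφc
  refine ⟨key, key.trans ?_⟩
  set D : EuclideanSpace ℝ (Fin d) × ℝ → ℝ := fun x => fderiv ℝ φ x (0, 1) with hD
  have hφ1 : ContDiff ℝ 1 φ := hφ.of_le (by simp)
  have hφd : Differentiable ℝ φ := hφ1.differentiable one_ne_zero
  have hfc : Continuous (fderiv ℝ φ) := hφ.continuous_fderiv (by simp)
  have hDcont : Continuous D := hfc.clm_apply continuous_const
  have hDsupp : Function.support D ⊆ tsupport φ := by
    intro x hx
    by_contra hxt
    apply hx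
    have h0 : φ =ᶠ[𝓝 x] 0 := notMem_tsupport_iff_eventuallyEq.mp hxt
    have h1 : fderiv ℝ φ x = fderiv ℝ (fun _ => (0:ℝ)) x := h0.fderiv_eq
    simp only [fderiv_fun_const] at h1
    simp [hD, h1]
  have hDc : HasCompactSupport D := hφc.mono' hDsupp
  -- the horizontal gradient
  set Gr : EuclideanSpace ℝ (Fin d) × ℝ → EuclideanSpace ℝ (Fin d) :=
    fun x => gradient (fun y => φ (y, x.2)) x.1 with hGr
  have hfd_eq : ∀ x : EuclideanSpace ℝ (Fin d) × ℝ,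
      fderiv ℝ (fun y => φ (y, x.2)) x.1
        = ((fderiv ℝ φ x).comp (ContinuousLinearMap.inl ℝ (EuclideanSpace ℝ (Fin d)) ℝ)) := by
    intro x
    have h1 : HasFDerivAt (fun y : EuclideanSpace ℝ (Fin d) => (y, x.2))
        (ContinuousLinearMap.inl ℝ (EuclideanSpace ℝ (Fin d)) ℝ) x.1 :=
      hasFDerivAt_prodMk_left x.1 x.2
    have h2 : HasFDerivAt φ (fderiv ℝ φ x) (x.1, x.2) := by
      rw [Prod.mk.eta]; exact (hφd x).hasFDerivAt
    exact (h2.comp x.1 h1).fderiv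
  have hGr_eq : ∀ x : EuclideanSpace ℝ (Fin d) × ℝ,
      Gr x = (InnerProductSpace.toDual ℝ (EuclideanSpace ℝ (Fin d))).symm
        ((fderiv ℝ φ x).comp (ContinuousLinearMap.inl ℝ (EuclideanSpace ℝ (Fin d)) ℝ)) := by
    intro x
    rw [hGr]
    show (InnerProductSpace.toDual ℝ (EuclideanSpace ℝ (Fin d))).symm
        (fderiv ℝ (fun y => φ (y, x.2)) x.1) = _
    rw [hfd_eq x]
  have hGrcont : Continuous Gr := by
    rw [show Gr = fun x => (InnerProductSpace.toDual ℝ (EuclideanSpace ℝ (Fin d))).symm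
        ((fderiv ℝ φ x).comp (ContinuousLinearMap.inl ℝ (EuclideanSpace ℝ (Fin d)) ℝ))
        from funext hGr_eq]
    exact (InnerProductSpace.toDual ℝ (EuclideanSpace ℝ (Fin d))).symm.continuous.comp
      (((ContinuousLinearMap.compL ℝ (EuclideanSpace ℝ (Fin d))
        (EuclideanSpace ℝ (Fin d) × ℝ) ℝ).flip
        (ContinuousLinearMap.inl ℝ (EuclideanSpace ℝ (Fin d)) ℝ)).continuous.comp hfc)
  have hGrsupp : Function.support Gr ⊆ tsupport φ := by
    intro x hx
    by_contra hxt
    apply hx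
    have h0 : φ =ᶠ[𝓝 x] 0 := notMem_tsupport_iff_eventuallyEq.mp hxt
    have h1 : fderiv ℝ φ x = fderiv ℝ (fun _ => (0:ℝ)) x := h0.fderiv_eq
    simp only [fderiv_fun_const] at h1
    simp only [Function.mem_support, ne_eq, not_not] at *
    rw [hGr_eq x, h1]
    simp
  -- the full-gradient integrand
  set G : EuclideanSpace ℝ (Fin d) × ℝ → ℝ := fun x => ‖Gr x‖ ^ 2 + D x ^ 2 with hG
  have hGcont : Continuous G := (hGrcont.norm.pow 2).add (hDcont.pow 2)
  have hGc : HasCompactSupport G := by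
    apply hφc.mono'
    intro x hx
    simp only [Function.mem_support, ne_eq] at hx
    by_contra hxt
    apply hx
    have h1 : Gr x = 0 := by
      by_contra h; exact hxt (hGrsupp h)
    have h2 : D x = 0 := by
      by_contra h; exact hxt (hDsupp h)
    simp [hG, h1, h2]
  have hGint : IntegrableOn G Ω := (hGcont.integrable_of_hasCompactSupport hGc).integrableOn
  have hD2c : HasCompactSupport (fun x => D x ^ 2) := by
    apply hDc.mono
    intro x hx
    simp only [Function.mem_support, ne_eq] at hx ⊢
    intro h; exact hx (by simp [h])
  have hDint : IntegrableOn (fun x => D x ^ 2) Ω :=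
    ((hDcont.pow 2).integrable_of_hasCompactSupport hD2c).integrableOn
  have hmono : (∫ x in Ω, D x ^ 2) ≤ ∫ x in Ω, G x := by
    refine integral_mono hDint hGint fun x => ?_
    exact le_add_of_nonneg_left (sq_nonneg _)
  have h0 : (0:ℝ) ≤ 2 * Real.sqrt (∫ x in Ω, (φ x) ^ 2) := by positivity
  exact mul_le_mul_of_nonneg_left (Real.sqrt_le_sqrt hmono) h0
end
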